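/- arXiv:0901.4968 — 5 statements merged into one kernel-verified Lean document; each statement's English description precedes it below -/
import Mathlib

section
/- For every real initial condition (x₀, y₀, z₀) ∈ ℝ³ there exist differentiable functions x, y, z : ℝ → ℝ defined for all real t that satisfy the real Lorenz system on all of ℝ and satisfy x(0) = x₀, y(0) = y₀, z(0) = z₀. In particular, a real solution of the Lorenz system has no singularity at any finite real value of t. -/
/-!
With `c = σ + ρ`, the function `V = x² + y² + (z - c)²` satisfies
`V' = -2 (σ x² + y² + β z (z - c))` along the Lorenz flow: the cubic terms cancel. Hence
`|V'| ≤ K V + ε`, and Grönwall's inequality, applied forwards and backwards in time, bounds `V`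
on every interval `[-T, T]`. Sublevel sets of `V` are bounded, so the solution of the field cut
off outside a large ball (globally Lipschitz and bounded, so Picard–Lindelöf gives it on all of
`[-T, T]`) never sees the cut-off. These solutions agree by uniqueness and glue to a global one.
-/

open Set Metric Topology
open scoped NNReal

section GlobalExistence

variable {E : Type*} [NormedAddCommGroup E] [NormedSpace ℝ E]

theorem exists_isIntegralCurveOn_Icc_of_lipschitzWith_of_norm_le [CompleteSpace E] {G : E → E}
    {K : ℝ≥0} {L : ℝ} (hG : LipschitzWith K G) (hGL : ∀ x, ‖G x‖ ≤ L) (x₀ : E) {a b t₀ : ℝ}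
    (ht₀ : t₀ ∈ Icc a b) :
    ∃ γ : ℝ → E, γ t₀ = x₀ ∧ IsIntegralCurveOn γ (fun _ ↦ G) (Icc a b) := by
  have hPL : IsPicardLindelof (fun _ ↦ G) ⟨t₀, ht₀⟩ x₀
      (L.toNNReal * (max (b - t₀) (t₀ - a)).toNNReal) 0 L.toNNReal K :=
    .of_time_independent (fun x _ ↦ (hGL x).trans (Real.le_coe_toNNReal L))
      hG.lipschitzOnWith (by simp [Real.coe_toNNReal _ (le_max_of_le_left (sub_nonneg.2 ht₀.2))])
  exact hPL.exists_eq_forall_mem_Icc_hasDerivWithinAt₀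

theorem IsIntegralCurveOn.eqOn_Icc_of_locallyLipschitz {F : E → E} (hF : LocallyLipschitz F)
    {γ₁ γ₂ : ℝ → E} {a b t₀ : ℝ} (h₁ : IsIntegralCurveOn γ₁ (fun _ ↦ F) (Icc a b))
    (h₂ : IsIntegralCurveOn γ₂ (fun _ ↦ F) (Icc a b)) (ht₀ : t₀ ∈ Ioo a b)
    (heq : γ₁ t₀ = γ₂ t₀) : EqOn γ₁ γ₂ (Icc a b) := by
  obtain ⟨K, hK⟩ := hF.locallyLipschitzOn.exists_lipschitzOnWith_of_compact
    ((isCompact_Icc.image_of_continuousOn h₁.continuousOn).union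
      (isCompact_Icc.image_of_continuousOn h₂.continuousOn))
  have hderiv {γ : ℝ → E} (hγ : IsIntegralCurveOn γ (fun _ ↦ F) (Icc a b)) (t : ℝ)
      (ht : t ∈ Ioo a b) : HasDerivAt γ (F (γ t)) t :=
    (hγ.isIntegralCurveAt (Icc_mem_nhds ht.1 ht.2)).hasDerivAt
  exact ODE_solution_unique_of_mem_Icc (v := fun _ ↦ F) (fun _ _ ↦ hK) ht₀
    h₁.continuousOn (hderiv h₁) (fun t ht ↦ .inl (mem_image_of_mem _ (Ioo_subset_Icc_self ht)))
    h₂.continuousOn (hderiv h₂) (fun t ht ↦ .inr (mem_image_of_mem _ (Ioo_subset_Icc_self ht)))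
    heq

theorem exists_isIntegralCurve_of_forall_isIntegralCurveOn_Icc {F : E → E}
    (hF : LocallyLipschitz F) {x₀ : E}
    (h : ∀ T > 0, ∃ γ : ℝ → E, γ 0 = x₀ ∧ IsIntegralCurveOn γ (fun _ ↦ F) (Icc (-T) T)) :
    ∃ γ : ℝ → E, γ 0 = x₀ ∧ IsIntegralCurve γ (fun _ ↦ F) := by
  choose γ hγ₀ hγ using h
  have agree {T₁ T₂ t : ℝ} (h₁ : 0 < T₁) (h₂ : 0 < T₂) (ht₁ : |t| ≤ T₁) (ht₂ : |t| ≤ T₂) :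
      γ T₁ h₁ t = γ T₂ h₂ t := by
    have hsub {T : ℝ} (hT : min T₁ T₂ ≤ T) : Icc (-min T₁ T₂) (min T₁ T₂) ⊆ Icc (-T) T :=
      Icc_subset_Icc (neg_le_neg hT) hT
    refine ((hγ T₁ h₁).mono (hsub (min_le_left _ _))).eqOn_Icc_of_locallyLipschitz hF
      ((hγ T₂ h₂).mono (hsub (min_le_right _ _))) (t₀ := 0) ?_ ?_ ?_
    · simp [h₁, h₂]
    · rw [hγ₀, hγ₀]
    · exact abs_le.1 (le_min ht₁ ht₂)
  have hpos (t : ℝ) : 0 < |t| + 1 := by positivity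
  refine ⟨fun t ↦ γ (|t| + 1) (hpos t) t, by simpa using hγ₀ 1 one_pos, fun t ↦ ?_⟩
  have hnhds : Icc (-(|t| + 1)) (|t| + 1) ∈ 𝓝 t :=
    Icc_mem_nhds (by linarith [neg_abs_le t]) (by linarith [le_abs_self t])
  have hloc : (fun s ↦ γ (|s| + 1) (hpos s) s) =ᶠ[𝓝 t] γ (|t| + 1) (hpos t) := by
    filter_upwards [hnhds] with s hs
    exact agree _ _ (by linarith) (abs_le.2 hs)
  exact ((hγ _ _).isIntegralCurveAt hnhds).hasDerivAt.congr_of_eventuallyEq hloc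

theorem IsIntegralCurveOn.le_gronwallBound {v : ℝ → E → E} {V : E → ℝ} {K ε T : ℝ}
    {γ : ℝ → E} (hV : Differentiable ℝ V) (hVv : ∀ t u, fderiv ℝ V u (v t u) ≤ K * V u + ε)
    (hγ : IsIntegralCurveOn γ v (Icc 0 T)) :
    ∀ t ∈ Icc 0 T, V (γ t) ≤ gronwallBound (V (γ 0)) K ε t := by
  have hderiv (t : ℝ) (ht : t ∈ Ico 0 T) :
      HasDerivWithinAt (V ∘ γ) (fderiv ℝ V (γ t) (v t (γ t))) (Ici t) t :=
    (hV (γ t)).hasFDerivAt.comp_hasDerivWithinAt t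
      ((hγ t (Ico_subset_Icc_self ht)).mono_of_mem_nhdsWithin (Icc_mem_nhdsGE_of_mem ht))
  simpa using le_gronwallBound_of_liminf_deriv_right_le
    (hV.continuous.comp_continuousOn hγ.continuousOn)
    (fun t ht _ hr ↦ (hderiv t ht).liminf_right_slope_le hr) le_rfl (fun t _ ↦ hVv t (γ t))

theorem IsIntegralCurveOn.le_gronwallBound_abs {W : E → E} {V : E → ℝ} {K ε T : ℝ}
    {γ : ℝ → E} (hV : Differentiable ℝ V) (hVW : ∀ u, |fderiv ℝ V u (W u)| ≤ K * V u + ε)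
    (hγ : IsIntegralCurveOn γ (fun _ ↦ W) (Icc (-T) T)) :
    ∀ t ∈ Icc (-T) T, V (γ t) ≤ gronwallBound (V (γ 0)) K ε |t| := by
  intro t ht
  rcases le_total 0 t with h | h
  · rw [abs_of_nonneg h]
    exact (hγ.mono (Icc_subset_Icc_left (by linarith [ht.2]))).le_gronwallBound hV
      (fun _ u ↦ (le_abs_self _).trans (hVW u)) t ⟨h, ht.2⟩
  · have hrev : IsIntegralCurveOn (γ ∘ (· * -1)) ((-1 : ℝ) • (fun _ ↦ W) ∘ (· * -1)) (Icc 0 T) :=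
      (hγ.comp_mul (-1)).mono fun s hs ↦ show s * -1 ∈ Icc (-T) T from
        ⟨by linarith [hs.2], by linarith [hs.1, ht.1]⟩
    have hVrev (s : ℝ) (u : E) :
        fderiv ℝ V u (((-1 : ℝ) • (fun _ ↦ W) ∘ (· * -1)) s u) ≤ K * V u + ε := by
      simpa using (neg_le_abs _).trans (hVW u)
    simpa [abs_of_nonpos h] using
      hrev.le_gronwallBound hV hVrev (-t) ⟨by linarith, by linarith [ht.1]⟩

theorem exists_isIntegralCurve_of_lyapunov [FiniteDimensional ℝ E] {F : E → E}
    (hF : ContDiff ℝ 1 F) {V : E → ℝ} (hV : Differentiable ℝ V)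
    (hVb : ∀ M, Bornology.IsBounded {u | V u ≤ M}) {K ε : ℝ}
    (hVF : ∀ u, |fderiv ℝ V u (F u)| ≤ K * V u + ε) (x₀ : E) :
    ∃ γ : ℝ → E, γ 0 = x₀ ∧ IsIntegralCurve γ (fun _ ↦ F) := by
  refine exists_isIntegralCurve_of_forall_isIntegralCurveOn_Icc hF.locallyLipschitz fun T hT ↦ ?_
  -- Cutting `F` off by `0 ≤ φ ≤ 1` keeps the Lyapunov inequality, and the resulting a priori bound
  -- keeps the solution of the cut-off field inside the ball where `φ = 1`.
  obtain ⟨M, hM⟩ : BddAbove (gronwallBound (V x₀) K ε '' Icc 0 T) :=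
    isCompact_Icc.bddAbove_image (continuous_iff_continuousAt.2 fun x ↦
      (hasDerivAt_gronwallBound _ _ _ x).continuousAt).continuousOn
  obtain ⟨R, hR⟩ := (hVb M).subset_closedBall 0
  let φ : ContDiffBump (0 : E) := ⟨max R 0 + 1, max R 0 + 2, by positivity, by linarith⟩
  have hG : ContDiff ℝ 1 (fun u ↦ φ u • F u) := φ.contDiff.smul hF
  have hGs : HasCompactSupport (fun u ↦ φ u • F u) := φ.hasCompactSupport.smul_right
  obtain ⟨K', hK'⟩ := hG.lipschitzWith_of_hasCompactSupport hGs one_ne_zero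
  obtain ⟨L, hL⟩ := hGs.exists_bound_of_continuous hG.continuous
  obtain ⟨γ, hγ₀, hγ⟩ := exists_isIntegralCurveOn_Icc_of_lipschitzWith_of_norm_le hK' hL x₀
    (⟨by linarith, hT.le⟩ : (0 : ℝ) ∈ Icc (-T) T)
  have hVG (u : E) : |fderiv ℝ V u (φ u • F u)| ≤ K * V u + ε := by
    rw [map_smul, smul_eq_mul, abs_mul, abs_of_nonneg φ.nonneg]
    exact (mul_le_of_le_one_left (abs_nonneg _) φ.le_one).trans (hVF u)
  refine ⟨γ, hγ₀, fun t ht ↦ ?_⟩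
  have hVγ : V (γ t) ≤ M := (hγ.le_gronwallBound_abs hV hVG t ht).trans
    (hγ₀ ▸ hM (mem_image_of_mem _ ⟨abs_nonneg t, abs_le.2 ht⟩))
  have hγt : γ t ∈ closedBall 0 φ.rIn :=
    closedBall_subset_closedBall (by simp only [φ]; linarith [le_max_left R 0]) (hR hVγ)
  simpa [φ.one_of_mem_closedBall hγt] using hγ t ht

end GlobalExistence

section Lorenz

def lorenzField (σ ρ β : ℝ) (u : ℝ × ℝ × ℝ) : ℝ × ℝ × ℝ :=
  (σ * (u.2.1 - u.1), ρ * u.1 - u.2.1 - u.1 * u.2.2, -β * u.2.2 + u.1 * u.2.1)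

def lorenzLyapunov (c : ℝ) (u : ℝ × ℝ × ℝ) : ℝ :=
  u.1 ^ 2 + u.2.1 ^ 2 + (u.2.2 - c) ^ 2

variable (σ ρ β : ℝ)

theorem contDiff_lorenzField : ContDiff ℝ 1 (lorenzField σ ρ β) := by
  unfold lorenzField; fun_prop

theorem differentiable_lorenzLyapunov (c : ℝ) : Differentiable ℝ (lorenzLyapunov c) := by
  unfold lorenzLyapunov; fun_prop

theorem fderiv_lorenzLyapunov_apply (c : ℝ) (u w : ℝ × ℝ × ℝ) :
    fderiv ℝ (lorenzLyapunov c) u w =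
      2 * u.1 * w.1 + 2 * u.2.1 * w.2.1 + 2 * (u.2.2 - c) * w.2.2 := by
  have hx := hasFDerivAt_fst (𝕜 := ℝ) (p := u)
  have hyz := hasFDerivAt_snd (𝕜 := ℝ) (p := u)
  have h : HasFDerivAt (lorenzLyapunov c) _ u :=
    ((hx.pow 2).add (hyz.fst.pow 2)).add ((hyz.snd.sub_const c).pow 2)
  rw [h.fderiv]
  simp

/-- The shift `σ + ρ` in the Lyapunov function is what makes the `x y` and `x y z` terms cancel. -/
theorem fderiv_lorenzLyapunov_lorenzField (u : ℝ × ℝ × ℝ) :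
    fderiv ℝ (lorenzLyapunov (σ + ρ)) u (lorenzField σ ρ β u) =
      -2 * (σ * u.1 ^ 2 + u.2.1 ^ 2 + β * (u.2.2 - (σ + ρ)) ^ 2
        + β * (σ + ρ) * (u.2.2 - (σ + ρ))) := by
  rw [fderiv_lorenzLyapunov_apply, lorenzField]
  ring

theorem abs_fderiv_lorenzLyapunov_lorenzField_le (u : ℝ × ℝ × ℝ) :
    |fderiv ℝ (lorenzLyapunov (σ + ρ)) u (lorenzField σ ρ β u)| ≤
      2 * (|σ| + |β| + |β * (σ + ρ)| + 1) * lorenzLyapunov (σ + ρ) u + |β * (σ + ρ)| := by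
  rw [fderiv_lorenzLyapunov_lorenzField, lorenzLyapunov]
  generalize u.1 = x, u.2.1 = y, u.2.2 - (σ + ρ) = w, β * (σ + ρ) = d
  have hx := sq_nonneg x
  have hy := sq_nonneg y
  have hw := sq_nonneg w
  have hσ := abs_nonneg σ
  have hβ := abs_nonneg β
  have hd := abs_nonneg d
  have hσ_add := neg_le_iff_add_nonneg'.1 (neg_abs_le σ)
  have hσ_sub := sub_nonneg.2 (le_abs_self σ)
  have hβ_add := neg_le_iff_add_nonneg'.1 (neg_abs_le β)
  have hβ_sub := sub_nonneg.2 (le_abs_self β)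
  have hd_add := neg_le_iff_add_nonneg'.1 (neg_abs_le d)
  have hd_sub := sub_nonneg.2 (le_abs_self d)
  rw [abs_le]
  -- `±2 d w ≤ |d| (w² + 1)` is the sum of `(|d| ± d) (w ∓ 1)² ≥ 0` and `(|d| ∓ d) (w ± 1)² ≥ 0`.
  constructor <;> linarith [mul_nonneg hσ hy, mul_nonneg hσ hw, mul_nonneg hβ hx,
    mul_nonneg hβ hy, mul_nonneg hd hx, mul_nonneg hd hy, mul_nonneg hd hw,
    mul_nonneg hσ_add hx, mul_nonneg hσ_sub hx, mul_nonneg hβ_add hw, mul_nonneg hβ_sub hw,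
    mul_nonneg hd_add (sq_nonneg (w + 1)), mul_nonneg hd_add (sq_nonneg (w - 1)),
    mul_nonneg hd_sub (sq_nonneg (w + 1)), mul_nonneg hd_sub (sq_nonneg (w - 1))]

theorem isBounded_lorenzLyapunov_le (c M : ℝ) :
    Bornology.IsBounded {u | lorenzLyapunov c u ≤ M} := by
  refine (isBounded_closedBall (x := (0 : ℝ × ℝ × ℝ)) (r := √M + |c|)).subset fun u hu ↦ ?_
  simp only [mem_ofPred_eq, lorenzLyapunov] at hu
  have hx : |u.1| ≤ √M := Real.abs_le_sqrt (by nlinarith [sq_nonneg u.2.1, sq_nonneg (u.2.2 - c)])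
  have hy : |u.2.1| ≤ √M := Real.abs_le_sqrt (by nlinarith [sq_nonneg u.1, sq_nonneg (u.2.2 - c)])
  have hz : |u.2.2 - c| ≤ √M := Real.abs_le_sqrt (by nlinarith [sq_nonneg u.1, sq_nonneg u.2.1])
  have := abs_sub_abs_le_abs_sub u.2.2 c
  simp only [mem_closedBall_zero_iff, norm_prod_le_iff, Real.norm_eq_abs]
  refine ⟨?_, ?_, ?_⟩ <;> linarith [abs_nonneg c]

theorem lorenz_exists_isIntegralCurve (u₀ : ℝ × ℝ × ℝ) :
    ∃ γ : ℝ → ℝ × ℝ × ℝ, γ 0 = u₀ ∧ IsIntegralCurve γ (fun _ ↦ lorenzField σ ρ β) :=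
  exists_isIntegralCurve_of_lyapunov (contDiff_lorenzField σ ρ β)
    (differentiable_lorenzLyapunov _) (isBounded_lorenzLyapunov_le _)
    (abs_fderiv_lorenzLyapunov_lorenzField_le σ ρ β) u₀

end Lorenz

/-- For every real initial condition `(x₀, y₀, z₀)` there is a global-in-time
real solution of the Lorenz system with that initial value; in particular real solutions
have no singularity at any finite real time. -/
theorem lorenz_global_real_solution (x₀ y₀ z₀ : ℝ) :
    ∃ x y z : ℝ → ℝ,
      (∀ t : ℝ,
        HasDerivAt x (10 * (y t - x t)) t ∧
        HasDerivAt y (28 * x t - y t - x t * z t) t ∧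
        HasDerivAt z (-(8 / 3) * z t + x t * y t) t) ∧
      x 0 = x₀ ∧ y 0 = y₀ ∧ z 0 = z₀ := by
  obtain ⟨γ, hγ₀, hγ⟩ := lorenz_exists_isIntegralCurve 10 28 (8 / 3) (x₀, y₀, z₀)
  refine ⟨fun t ↦ (γ t).1, fun t ↦ (γ t).2.1, fun t ↦ (γ t).2.2, fun t ↦ ⟨?_, ?_, ?_⟩,
    by simp [hγ₀], by simp [hγ₀], by simp [hγ₀]⟩
  · exact (hasFDerivAt_fst (𝕜 := ℝ) (p := γ t)).comp_hasDerivAt t (hγ t)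
  · exact (hasFDerivAt_fst (𝕜 := ℝ) (p := (γ t).2)).comp_hasDerivAt t
      ((hasFDerivAt_snd (𝕜 := ℝ) (p := γ t)).comp_hasDerivAt t (hγ t))
  · exact (hasFDerivAt_snd (𝕜 := ℝ) (p := (γ t).2)).comp_hasDerivAt t
      ((hasFDerivAt_snd (𝕜 := ℝ) (p := γ t)).comp_hasDerivAt t (hγ t))
end

section
/- Let P, Q, R ∈ ℂ[η] be polynomials satisfying the differential system P' = 10(Q − 2i), Q' = Q − 2i R + P/5 + i/5, R' = R + 2i Q − (i/5) P + 8/15, where ' denotes the derivative with respect to η. Then P, Q, R are the constant polynomials P = 71i/9, Q = 2i, R = 17/9, and in particular this constant triple satisfies the system. -/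
open Polynomial Complex

/-!
Write the system as `p' = A p + b` for the vector `p = (P, Q, R)` with a constant matrix `A` and
constant vector `b`. Comparing coefficients of `X ^ k` gives `(k + 1) c (k + 1) = A c k` for `k ≥ 1`,
where `c k` is the vector of degree-`k` coefficients. Since `A` is invertible (`det A = -6`), the
vanishing of `c (k + 1)` forces that of `c k`, so descending from above the degrees all `c k` with
`k ≥ 1` vanish. The constant term then gives `0 = c 1 = A c 0 + b`, whose unique solution is
`(71i/9, 2i, 17/9)`.
-/

namespace Polynomial

open Matrix

variable {R ι : Type*} [CommRing R] [Fintype ι]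

theorem coeff_map_C_mulVec (A : Matrix ι ι R) (p : ι → R[X]) (i : ι) (k : ℕ) :
    ((A.map C *ᵥ p) i).coeff k = (A *ᵥ fun j => (p j).coeff k) i := by
  simp [mulVec, dotProduct, finsetSum_coeff]

variable {A : Matrix ι ι R} {b : ι → R} {p : ι → R[X]}

theorem coeff_succ_mul_eq_of_derivative_eq
    (h : ∀ i, derivative (p i) = (A.map C *ᵥ p) i + C (b i)) (i : ι) (k : ℕ) :
    (p i).coeff (k + 1) * (k + 1) =
      (A *ᵥ fun j => (p j).coeff k) i + if k = 0 then b i else 0 := by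
  simpa only [coeff_derivative, coeff_add, coeff_map_C_mulVec, coeff_C, eq_comm (a := k)]
    using congrArg (coeff · k) (h i)

theorem coeff_eq_zero_of_coeff_succ_eq_zero (hA : Function.Injective A.mulVec)
    (h : ∀ i, derivative (p i) = (A.map C *ᵥ p) i + C (b i)) {k : ℕ} (hk : k ≠ 0)
    (hsucc : ∀ i, (p i).coeff (k + 1) = 0) : ∀ i, (p i).coeff k = 0 := by
  have hker : (A *ᵥ fun j => (p j).coeff k) = A *ᵥ 0 := by
    ext i
    simpa [hsucc, hk] using (coeff_succ_mul_eq_of_derivative_eq h i k).symm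
  exact congrFun (hA hker)

theorem coeff_eq_zero_of_derivative_eq (hA : Function.Injective A.mulVec)
    (h : ∀ i, derivative (p i) = (A.map C *ᵥ p) i + C (b i)) {k : ℕ} (hk : k ≠ 0) (i : ι) :
    (p i).coeff k = 0 := by
  set N := Finset.univ.sup fun j => (p j).natDegree
  have htop : ∀ j, (p j).coeff (N + k) = 0 := fun j =>
    coeff_eq_zero_of_natDegree_lt <| (Finset.le_sup (f := fun j => (p j).natDegree)
      (Finset.mem_univ j)).trans_lt (by omega)
  refine Nat.decreasingInduction (motive := fun m _ => m ≠ 0 → ∀ j, (p j).coeff m = 0)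
    (fun m _ ih hm => coeff_eq_zero_of_coeff_succ_eq_zero hA h hm (ih m.succ_ne_zero))
    (fun _ => htop) (Nat.le_add_left k N) hk i

theorem eq_C_of_derivative_eq (hA : Function.Injective A.mulVec)
    (h : ∀ i, derivative (p i) = (A.map C *ᵥ p) i + C (b i)) :
    (∀ i, p i = C ((p i).coeff 0)) ∧ (A *ᵥ fun i => (p i).coeff 0) + b = 0 := by
  refine ⟨fun i => eq_C_of_natDegree_le_zero ?_, ?_⟩
  · exact natDegree_le_iff_coeff_eq_zero.2 fun k hk =>
      coeff_eq_zero_of_derivative_eq hA h hk.ne' i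
  · ext i
    simpa [coeff_eq_zero_of_derivative_eq hA h one_ne_zero] using
      (coeff_succ_mul_eq_of_derivative_eq h i 0).symm

end Polynomial

open Matrix

noncomputable section

def lorenzMatrix : Matrix (Fin 3) (Fin 3) ℂ :=
  !![0, 10, 0; 1 / 5, 1, -(2 * I); -(I / 5), 2 * I, 1]

def lorenzForcing : Fin 3 → ℂ := ![-(10 * (2 * I)), I / 5, 8 / 15]

def lorenzEquilibrium : Fin 3 → ℂ := ![71 * I / 9, 2 * I, 17 / 9]

end

theorem lorenzMatrix_det : lorenzMatrix.det = -6 := by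
  simp [lorenzMatrix, det_fin_three, Complex.ext_iff]
  norm_num

theorem lorenzMatrix_mulVec_injective : Function.Injective lorenzMatrix.mulVec :=
  mulVec_injective_of_isUnit <| (isUnit_iff_isUnit_det _).2 <| by
    rw [lorenzMatrix_det]; norm_num

theorem lorenzMatrix_mulVec_lorenzEquilibrium :
    lorenzMatrix *ᵥ lorenzEquilibrium + lorenzForcing = 0 := by
  ext i
  fin_cases i <;> norm_num [lorenzMatrix, lorenzEquilibrium, lorenzForcing, Complex.ext_iff]

/-- If polynomials `P, Q, R ∈ ℂ[η]` satisfy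
`P' = 10(Q − 2i)`, `Q' = Q − 2i R + P/5 + i/5`, `R' = R + 2i Q − (i/5) P + 8/15`,
then `P = 71i/9`, `Q = 2i`, `R = 17/9` (constant polynomials); in particular this
constant triple satisfies the system. -/
theorem lorenz_next_coefficients (P Q R : ℂ[X])
    (hP : derivative P = 10 * (Q - C (2 * I)))
    (hQ : derivative Q = Q - C (2 * I) * R + C (1 / 5) * P + C (I / 5))
    (hR : derivative R = R + C (2 * I) * Q - C (I / 5) * P + C (8 / 15)) :
    (P = C (71 * I / 9) ∧ Q = C (2 * I) ∧ R = C (17 / 9)) ∧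
      (derivative (C (71 * I / 9) : ℂ[X]) = 10 * (C (2 * I) - C (2 * I)) ∧
       derivative (C (2 * I) : ℂ[X]) =
         C (2 * I) - C (2 * I) * C (17 / 9) + C (1 / 5) * C (71 * I / 9) + C (I / 5) ∧
       derivative (C (17 / 9) : ℂ[X]) =
         C (17 / 9) + C (2 * I) * C (2 * I) - C (I / 5) * C (71 * I / 9) + C (8 / 15)) := by
  have hsys : ∀ i, derivative (![P, Q, R] i) =
      (lorenzMatrix.map C *ᵥ ![P, Q, R]) i + C (lorenzForcing i) := by
    intro i
    fin_cases i <;>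
      simp [lorenzMatrix, lorenzForcing, mulVec, dotProduct, Fin.sum_univ_three, C_ofNat,
        hP, hQ, hR] <;> ring
  obtain ⟨hconst, hcoeff⟩ := eq_C_of_derivative_eq lorenzMatrix_mulVec_injective hsys
  have hequil : (fun i => (![P, Q, R] i).coeff 0) = lorenzEquilibrium :=
    lorenzMatrix_mulVec_injective <| add_right_cancel <|
      hcoeff.trans lorenzMatrix_mulVec_lorenzEquilibrium.symm
  obtain ⟨rfl, rfl, rfl⟩ : P = C (71 * I / 9) ∧ Q = C (2 * I) ∧ R = C (17 / 9) :=
    ⟨(hconst 0).trans (congrArg C (congrFun hequil 0)),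
      (hconst 1).trans (congrArg C (congrFun hequil 1)),
      (hconst 2).trans (congrArg C (congrFun hequil 2))⟩
  exact ⟨⟨rfl, rfl, rfl⟩, hP, hQ, hR⟩
end

section
/- For every m ∈ ℕ (or more generally every m ∈ ℂ), the characteristic polynomial of the matrix A_m factors as (X − (−m + 2)) · (X − (−m)) · (X − (−m − 3)); that is, the eigenvalues of A_m are −m + 2, −m, and −m − 3. -/
open Polynomial Complex

theorem Matrix.charpoly_fin_three_of {R : Type*} [CommRing R] (a b c d e f g h i : R) :
    (!![a, b, c; d, e, f; g, h, i]).charpoly =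
      X ^ 3 - C (a + e + i) * X ^ 2 + C (a * e - b * d + a * i - c * g + e * i - f * h) * X -
        C (a * e * i - a * f * h - b * d * i + b * f * g + c * d * h - c * e * g) := by
  simp only [charpoly, det_fin_three, charmatrix_apply, diagonal_apply, of_apply, cons_val',
    cons_val_zero, cons_val_one, cons_val, cons_val_fin_one, Fin.isValue, Fin.reduceEq, if_true,
    if_false, map_add, map_sub, map_mul]
  ring

theorem Polynomial.X_sub_C_mul_X_sub_C_mul_X_sub_C {R : Type*} [CommRing R] (a b c : R) :
    (X - C a) * (X - C b) * (X - C c) =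
      X ^ 3 - C (a + b + c) * X ^ 2 + C (a * b + a * c + b * c) * X - C (a * b * c) := by
  simp only [map_add, map_mul]
  ring

/-- For every `m ∈ ℂ` (so in particular for every `m ∈ ℕ`), the characteristic
polynomial of the matrix `A_m`, whose rows are `(−m−1, 10, 0)`, `(1/5, −m, −2i)`,
`(−i/5, 2i, −m)`, factors as `(X − (−m+2))(X − (−m))(X − (−m−3))`; that is, its
eigenvalues are `−m + 2`, `−m`, `−m − 3`. -/
theorem lorenz_recursion_matrix_eigenvalues (m : ℂ) :
    Matrix.charpoly
        !![-m - 1, 10, 0;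
           1 / 5, -m, -(2 * I);
           -(I / 5), 2 * I, -m] =
      (X - C (-m + 2)) * (X - C (-m)) * (X - C (-m - 3)) := by
  rw [Matrix.charpoly_fin_three_of, X_sub_C_mul_X_sub_C_mul_X_sub_C]
  congr 5
  · ring
  · linear_combination 4 * I_sq
  · linear_combination (-4 * m) * I_sq
end

section
/- Let α ∈ ℂ with |α| > 1 and let f ∈ ℂ[η] be a polynomial of degree n. Let ξ ∈ ℂ[η] be a polynomial solution of the differential equation dξ/dη = α ξ + f(η). If a > 1 is a real number such that |α| ≥ a(n + 1/2), then |ξ| ≤ (1/|α|) · (a/(a−1)) · |f|. -/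
/-!
Comparing coefficients in `ξ' = α ξ + f` shows `deg ξ ≤ n` (as `α ≠ 0`) and
`α ξ = ξ' - f`. Differentiation multiplies the coefficient norm of a polynomial of degree at most
`n` by at most `n`, so `|α| |ξ| ≤ n |ξ| + |f|`, and `|α| - n ≥ |α| (a - 1) / a` finishes.
-/

open Polynomial

/-- For a polynomial `p ∈ ℂ[η]`, `psiNorm p` is the sum of the absolute values of its
coefficients. -/
noncomputable def psiNorm (p : Polynomial ℂ) : ℝ :=
  ∑ i ∈ Finset.range (p.natDegree + 1), ‖p.coeff i‖

lemma psiNorm_eq_sum_range (p : ℂ[X]) {N : ℕ} (hN : p.natDegree < N) :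
    psiNorm p = ∑ i ∈ Finset.range N, ‖p.coeff i‖ := by
  refine Finset.sum_subset (Finset.range_subset_range.mpr hN) fun i _ hi => ?_
  rw [Finset.mem_range, not_lt] at hi
  rw [coeff_eq_zero_of_natDegree_lt (by omega), norm_zero]

lemma psiNorm_nonneg (p : ℂ[X]) : 0 ≤ psiNorm p :=
  Finset.sum_nonneg fun _ _ => norm_nonneg _

lemma psiNorm_C_mul (c : ℂ) (p : ℂ[X]) : psiNorm (C c * p) = ‖c‖ * psiNorm p := by
  rw [psiNorm_eq_sum_range _ (Nat.lt_succ_of_le (natDegree_C_mul_le c p)), psiNorm,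
    Finset.mul_sum]
  simp only [coeff_C_mul, norm_mul]

lemma psiNorm_sub_le (p q : ℂ[X]) : psiNorm (p - q) ≤ psiNorm p + psiNorm q := by
  set N := max p.natDegree q.natDegree + 1
  rw [psiNorm_eq_sum_range (p - q) (Nat.lt_succ_of_le (natDegree_sub_le p q)),
    psiNorm_eq_sum_range p (N := N) (by omega), psiNorm_eq_sum_range q (N := N) (by omega),
    ← Finset.sum_add_distrib]
  exact Finset.sum_le_sum fun i _ => by simpa only [coeff_sub] using norm_sub_le _ _

lemma psiNorm_derivative_le (p : ℂ[X]) :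
    psiNorm (derivative p) ≤ p.natDegree * psiNorm p := by
  set d := p.natDegree
  have hterm : ∀ i, ‖p.coeff (i + 1)‖ * (i + 1) ≤ d * ‖p.coeff (i + 1)‖ := fun i => by
    rcases Nat.lt_or_ge d (i + 1) with hi | hi
    · simp [coeff_eq_zero_of_natDegree_lt hi]
    · rw [mul_comm]
      exact mul_le_mul_of_nonneg_right (by exact_mod_cast hi) (norm_nonneg _)
  have hshift : ∑ i ∈ Finset.range (d + 1), ‖p.coeff (i + 1)‖ ≤ psiNorm p := by
    rw [psiNorm_eq_sum_range p (N := d + 2) (by omega), Finset.sum_range_succ' _ (d + 1)]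
    exact le_add_of_nonneg_right (norm_nonneg _)
  calc psiNorm (derivative p)
      = ∑ i ∈ Finset.range (d + 1), ‖p.coeff (i + 1)‖ * (i + 1) := by
        rw [psiNorm_eq_sum_range _ (N := d + 1)
          (Nat.lt_succ_of_le ((natDegree_derivative_le p).trans (Nat.sub_le _ _)))]
        refine Finset.sum_congr rfl fun i _ => ?_
        rw [coeff_derivative, norm_mul, ← Nat.cast_succ, Complex.norm_natCast, Nat.cast_succ]
    _ ≤ ∑ i ∈ Finset.range (d + 1), d * ‖p.coeff (i + 1)‖ := Finset.sum_le_sum fun i _ => hterm i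
    _ ≤ d * psiNorm p := by
        rw [← Finset.mul_sum]
        exact mul_le_mul_of_nonneg_left hshift (Nat.cast_nonneg _)

section LinearODE

variable {α : ℂ} {ξ f : ℂ[X]}

lemma Polynomial.natDegree_le_of_derivative_eq (hα : α ≠ 0) (hξ : derivative ξ = C α * ξ + f) :
    ξ.natDegree ≤ f.natDegree := by
  have hdeg : ξ.natDegree ≤ max (ξ.natDegree - 1) f.natDegree := by
    calc ξ.natDegree = (derivative ξ - f).natDegree := by
          rw [hξ, add_sub_cancel_right, natDegree_C_mul hα]
      _ ≤ max (derivative ξ).natDegree f.natDegree := natDegree_sub_le _ _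
      _ ≤ max (ξ.natDegree - 1) f.natDegree := max_le_max_right _ (natDegree_derivative_le ξ)
  omega

lemma sub_natDegree_mul_psiNorm_le (hα : α ≠ 0) (hξ : derivative ξ = C α * ξ + f) :
    (‖α‖ - f.natDegree) * psiNorm ξ ≤ psiNorm f := by
  have hdeg : (ξ.natDegree : ℝ) ≤ f.natDegree := by
    exact_mod_cast natDegree_le_of_derivative_eq hα hξ
  have hbound : ‖α‖ * psiNorm ξ ≤ f.natDegree * psiNorm ξ + psiNorm f :=
    calc ‖α‖ * psiNorm ξ = psiNorm (derivative ξ - f) := by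
          rw [hξ, add_sub_cancel_right, psiNorm_C_mul]
      _ ≤ psiNorm (derivative ξ) + psiNorm f := psiNorm_sub_le _ _
      _ ≤ ξ.natDegree * psiNorm ξ + psiNorm f := by gcongr; exact psiNorm_derivative_le ξ
      _ ≤ f.natDegree * psiNorm ξ + psiNorm f := by gcongr; exact psiNorm_nonneg ξ
  linarith

end LinearODE

theorem polynomial_ode_norm_bound_general (α : ℂ)
    (n : ℕ) (f : ℂ[X]) (hf : f.natDegree = n)
    (ξ : ℂ[X]) (hξ : derivative ξ = C α * ξ + f)
    (a : ℝ) (ha : 1 < a) (haα : a * (n + 1 / 2) ≤ ‖α‖) :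
    psiNorm ξ ≤ 1 / ‖α‖ * (a / (a - 1)) * psiNorm f := by
  have hαpos : 0 < ‖α‖ := by nlinarith [n.cast_nonneg (α := ℝ)]
  have hkey := sub_natDegree_mul_psiNorm_le (norm_pos_iff.mp hαpos) hξ
  rw [hf] at hkey
  have hgap : ‖α‖ * ((a - 1) / a) ≤ ‖α‖ - n := by
    rw [mul_div_assoc', div_le_iff₀ (by linarith)]
    nlinarith
  have hgap_pos : 0 < ‖α‖ * ((a - 1) / a) := by
    have : 0 < a - 1 := by linarith
    positivity
  calc psiNorm ξ ≤ psiNorm f / (‖α‖ * ((a - 1) / a)) := by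
        rw [le_div_iff₀ hgap_pos]
        nlinarith [psiNorm_nonneg ξ]
    _ = 1 / ‖α‖ * (a / (a - 1)) * psiNorm f := by
        field_simp

/-- Let `|α| > 1`, let `f ∈ ℂ[η]` have degree `n`, and let `ξ` be a polynomial
solution of `ξ' = α ξ + f`.  If `a > 1` and `|α| ≥ a(n + 1/2)`, then
`|ξ| ≤ (1/|α|) (a/(a−1)) |f|`. -/
theorem polynomial_ode_norm_bound (α : ℂ) (hα : 1 < ‖α‖)
    (n : ℕ) (f : ℂ[X]) (hf : f.natDegree = n)
    (ξ : ℂ[X]) (hξ : derivative ξ = C α * ξ + f)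
    (a : ℝ) (ha : 1 < a) (haα : a * (n + 1 / 2) ≤ ‖α‖) :
    psiNorm ξ ≤ 1 / ‖α‖ * (a / (a - 1)) * psiNorm f :=
  polynomial_ode_norm_bound_general α n f hf ξ hξ a ha haα
end

section
/- Let (x_m)_{m ≥ 0} be a sequence of nonnegative real numbers such that for all m ≥ 8, x_m = 960 x_{m−1} + 896 x_{m−2} + 32 ∑_{j=1}^{m−1} x_{m−j−1} x_{j−1}. Then there exist positive constants K₁ and K₂ such that x_m ≤ K₁ K₂^m for all m ≥ 0. -/
/-!
A purely geometric ansatz `x m ≤ C r ^ m` does not survive the induction, because the convolution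
term has `m` summands. The weighted ansatz `x m ≤ C r ^ m / (m + 1) ^ 2` does: since
`1 / (i² j²) ≤ 2 (1 / i² + 1 / j²) / (i + j)²` and `∑ 1 / k² ≤ 2`, the convolution of the weights
`1 / (k + 1) ^ 2` is again bounded by `8 / (n + 2) ^ 2`, so the recurrence closes as soon as
`r ^ 2 ≥ 4 a r + 9 b + 32 c C`.
-/

open Finset

lemma sum_range_inv_succ_sq_le_two (n : ℕ) : ∑ k ∈ range n, (((k : ℝ) + 1) ^ 2)⁻¹ ≤ 2 := by
  have hIoo : Ioo 0 (n + 1) = Ico (0 + 1) (n + 1) := by ext; simp; omega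
  have h := sum_Ioo_inv_sq_le (α := ℝ) 0 (n + 1)
  rw [hIoo, ← sum_Ico_add', ← range_eq_Ico] at h
  simpa using h

lemma inv_sq_mul_le {a b : ℝ} (ha : 0 < a) (hb : 0 < b) :
    ((a * b) ^ 2)⁻¹ ≤ 2 / (a + b) ^ 2 * ((a ^ 2)⁻¹ + (b ^ 2)⁻¹) := by
  have hab : (a + b) ^ 2 * ((a * b) ^ 2)⁻¹ = (a⁻¹ + b⁻¹) ^ 2 := by field_simp; ring
  rw [div_mul_eq_mul_div, le_div_iff₀ (by positivity), mul_comm, hab]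
  nlinarith [sq_nonneg (a⁻¹ - b⁻¹), inv_pow a 2, inv_pow b 2]

lemma sum_antidiagonal_inv_sq_le (n : ℕ) :
    ∑ p ∈ antidiagonal n, ((((p.1 : ℝ) + 1) * ((p.2 : ℝ) + 1)) ^ 2)⁻¹ ≤ 8 / ((n : ℝ) + 2) ^ 2 := by
  set g : ℕ → ℝ := fun k ↦ (((k : ℝ) + 1) ^ 2)⁻¹
  have hterm : ∀ p ∈ antidiagonal n, ((((p.1 : ℝ) + 1) * ((p.2 : ℝ) + 1)) ^ 2)⁻¹ ≤
      2 / ((n : ℝ) + 2) ^ 2 * (g p.1 + g p.2) := by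
    intro p hp
    have hsum : ((p.1 : ℝ) + 1) + ((p.2 : ℝ) + 1) = (n : ℝ) + 2 := by
      rw [← mem_antidiagonal.1 hp]; push_cast; ring
    rw [← hsum]
    exact inv_sq_mul_le (by positivity) (by positivity)
  have hg : ∑ p ∈ antidiagonal n, g p.2 = ∑ p ∈ antidiagonal n, g p.1 :=
    Nat.sum_antidiagonal_swap (f := fun p ↦ g p.1)
  calc _ ≤ ∑ p ∈ antidiagonal n, 2 / ((n : ℝ) + 2) ^ 2 * (g p.1 + g p.2) := sum_le_sum hterm
    _ = 2 / ((n : ℝ) + 2) ^ 2 * (2 * ∑ k ∈ range (n + 1), g k) := by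
      rw [← mul_sum, sum_add_distrib, hg, ← two_mul,
        Nat.sum_antidiagonal_eq_sum_range_succ (fun i _ ↦ g i)]
    _ ≤ 2 / ((n : ℝ) + 2) ^ 2 * (2 * 2) := by gcongr; exact sum_range_inv_succ_sq_le_two _
    _ = 8 / ((n : ℝ) + 2) ^ 2 := by ring

lemma sum_antidiagonal_mul_le {x y : ℕ → ℝ} {C D r : ℝ} {n : ℕ}
    (hx₀ : ∀ k, 0 ≤ x k) (hy₀ : ∀ k, 0 ≤ y k) (hr : 0 ≤ r)
    (hx : ∀ k ≤ n, x k ≤ C * r ^ k / ((k : ℝ) + 1) ^ 2)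
    (hy : ∀ k ≤ n, y k ≤ D * r ^ k / ((k : ℝ) + 1) ^ 2) :
    ∑ p ∈ antidiagonal n, x p.1 * y p.2 ≤ 8 * C * D * r ^ n / ((n : ℝ) + 2) ^ 2 := by
  have hterm : ∀ p ∈ antidiagonal n, x p.1 * y p.2 ≤
      C * D * r ^ n * ((((p.1 : ℝ) + 1) * ((p.2 : ℝ) + 1)) ^ 2)⁻¹ := by
    intro p hp
    have hp' := mem_antidiagonal.1 hp
    calc x p.1 * y p.2
        ≤ C * r ^ p.1 / ((p.1 : ℝ) + 1) ^ 2 * (D * r ^ p.2 / ((p.2 : ℝ) + 1) ^ 2) :=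
          mul_le_mul (hx _ (by omega)) (hy _ (by omega)) (hy₀ _) ((hx₀ _).trans (hx _ (by omega)))
      _ = C * D * r ^ (p.1 + p.2) * ((((p.1 : ℝ) + 1) * ((p.2 : ℝ) + 1)) ^ 2)⁻¹ := by
          rw [pow_add]; field_simp
      _ = _ := by rw [hp']
  have hCD : 0 ≤ C * D * r ^ n := by
    have hC : 0 ≤ C := by simpa using (hx₀ 0).trans (hx 0 n.zero_le)
    have hD : 0 ≤ D := by simpa using (hy₀ 0).trans (hy 0 n.zero_le)
    positivity
  calc _ ≤ ∑ p ∈ antidiagonal n, C * D * r ^ n * ((((p.1 : ℝ) + 1) * ((p.2 : ℝ) + 1)) ^ 2)⁻¹ :=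
        sum_le_sum hterm
    _ ≤ C * D * r ^ n * (8 / ((n : ℝ) + 2) ^ 2) := by
        rw [← mul_sum]; exact mul_le_mul_of_nonneg_left (sum_antidiagonal_inv_sq_le n) hCD
    _ = _ := by ring

lemma sum_Icc_eq_sum_antidiagonal {M : Type*} [AddCommMonoid M] (f : ℕ → ℕ → M) (n : ℕ) :
    ∑ j ∈ Icc 1 (n + 1), f (n + 1 - j) (j - 1) = ∑ p ∈ antidiagonal n, f p.1 p.2 := by
  refine sum_nbij' (fun j ↦ (n + 1 - j, j - 1)) (fun p ↦ p.2 + 1) ?_ ?_ ?_ ?_ (fun _ _ ↦ rfl) <;>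
    simp only [mem_Icc, HasAntidiagonal.mem_antidiagonal, Prod.forall, Prod.mk.injEq] <;> omega

section QuadraticRecurrence

variable {x : ℕ → ℝ} {a b c : ℝ} {N : ℕ}

theorem le_div_succ_sq_of_quadratic_recurrence (hx : ∀ k, 0 ≤ x k)
    (ha : 0 ≤ a) (hb : 0 ≤ b) (hc : 0 ≤ c)
    (hrec : ∀ n, N ≤ n → x (n + 2) ≤
      a * x (n + 1) + b * x n + c * ∑ p ∈ antidiagonal n, x p.1 * x p.2)
    {C r : ℝ} (hbase : ∀ k < N + 2, x k * ((k : ℝ) + 1) ^ 2 ≤ C) (hr : 1 ≤ r)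
    (hrC : 4 * a * r + 9 * b + 32 * c * C ≤ r ^ 2) (m : ℕ) :
    x m ≤ C * r ^ m / ((m : ℝ) + 1) ^ 2 := by
  have hC : 0 ≤ C := (mul_nonneg (hx 0) (by positivity)).trans (hbase 0 (by omega))
  induction m using Nat.strong_induction_on with
  | _ m ih =>
  rw [le_div_iff₀ (by positivity)]
  by_cases hm : m < N + 2
  · exact (hbase m hm).trans (le_mul_of_one_le_right hC (one_le_pow₀ hr))
  obtain ⟨n, rfl⟩ : ∃ n, m = n + 2 := ⟨m - 2, by omega⟩
  have h₁ : x (n + 1) * ((n : ℝ) + 2) ^ 2 ≤ C * r ^ (n + 1) := by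
    have := ih (n + 1) (by omega)
    rwa [le_div_iff₀ (by positivity), Nat.cast_succ, add_assoc, one_add_one_eq_two] at this
  have h₀ : x n * ((n : ℝ) + 1) ^ 2 ≤ C * r ^ n := by
    have := ih n (by omega)
    rwa [le_div_iff₀ (by positivity)] at this
  have hS : (∑ p ∈ antidiagonal n, x p.1 * x p.2) * ((n : ℝ) + 2) ^ 2 ≤ 8 * C * C * r ^ n := by
    rw [← le_div_iff₀ (by positivity)]
    exact sum_antidiagonal_mul_le hx hx (by linarith) (fun k hk ↦ ih k (by omega))
      (fun k hk ↦ ih k (by omega))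
  have hS₀ : 0 ≤ ∑ p ∈ antidiagonal n, x p.1 * x p.2 :=
    sum_nonneg fun p _ ↦ mul_nonneg (hx _) (hx _)
  have hn₂ : (((n + 2 : ℕ) : ℝ) + 1) ^ 2 ≤ 4 * ((n : ℝ) + 2) ^ 2 := by
    push_cast; nlinarith [n.cast_nonneg (α := ℝ)]
  have hn₁ : (((n + 2 : ℕ) : ℝ) + 1) ^ 2 ≤ 9 * ((n : ℝ) + 1) ^ 2 := by
    push_cast; nlinarith [n.cast_nonneg (α := ℝ)]
  calc x (n + 2) * (((n + 2 : ℕ) : ℝ) + 1) ^ 2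
      ≤ (a * x (n + 1) + b * x n + c * ∑ p ∈ antidiagonal n, x p.1 * x p.2) *
          (((n + 2 : ℕ) : ℝ) + 1) ^ 2 := by
        gcongr; exact hrec n (by omega)
    _ ≤ 4 * a * (x (n + 1) * ((n : ℝ) + 2) ^ 2) + 9 * b * (x n * ((n : ℝ) + 1) ^ 2) +
          4 * c * ((∑ p ∈ antidiagonal n, x p.1 * x p.2) * ((n : ℝ) + 2) ^ 2) := by
        rw [add_mul, add_mul]
        gcongr ?_ + ?_ + ?_
        · nlinarith [mul_le_mul_of_nonneg_left hn₂ (mul_nonneg ha (hx (n + 1)))]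
        · nlinarith [mul_le_mul_of_nonneg_left hn₁ (mul_nonneg hb (hx n))]
        · nlinarith [mul_le_mul_of_nonneg_left hn₂ (mul_nonneg hc hS₀)]
    _ ≤ 4 * a * (C * r ^ (n + 1)) + 9 * b * (C * r ^ n) + 4 * c * (8 * C * C * r ^ n) := by
        gcongr
    _ = C * r ^ n * (4 * a * r + 9 * b + 32 * c * C) := by ring
    _ ≤ C * r ^ n * r ^ 2 := by gcongr
    _ = C * r ^ (n + 2) := by ring

theorem exists_geometric_bound_of_quadratic_recurrence (hx : ∀ k, 0 ≤ x k)
    (ha : 0 ≤ a) (hb : 0 ≤ b) (hc : 0 ≤ c)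
    (hrec : ∀ n, N ≤ n → x (n + 2) ≤
      a * x (n + 1) + b * x n + c * ∑ p ∈ antidiagonal n, x p.1 * x p.2) :
    ∃ K r : ℝ, 0 < K ∧ 0 < r ∧ ∀ m, x m ≤ K * r ^ m := by
  set C : ℝ := 1 + ∑ k ∈ range (N + 2), x k * ((k : ℝ) + 1) ^ 2
  set r : ℝ := 4 * a + 9 * b + 32 * c * C + 1
  have hterms : ∀ k ∈ range (N + 2), 0 ≤ x k * ((k : ℝ) + 1) ^ 2 :=
    fun k _ ↦ mul_nonneg (hx k) (by positivity)
  have hbase : ∀ k < N + 2, x k * ((k : ℝ) + 1) ^ 2 ≤ C := fun k hk ↦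
    (single_le_sum hterms (mem_range.2 hk)).trans (le_add_of_nonneg_left zero_le_one)
  have hC : 0 < C := add_pos_of_pos_of_nonneg one_pos (sum_nonneg hterms)
  have hr : 1 ≤ r := by nlinarith [mul_nonneg hc hC.le]
  have hrC : 4 * a * r + 9 * b + 32 * c * C ≤ r ^ 2 := by
    nlinarith [mul_nonneg hc hC.le]
  refine ⟨C, r, hC, by linarith, fun m ↦ ?_⟩
  calc x m ≤ C * r ^ m / ((m : ℝ) + 1) ^ 2 :=
        le_div_succ_sq_of_quadratic_recurrence hx ha hb hc hrec hbase hr hrC m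
    _ ≤ C * r ^ m := div_le_self (by positivity) (by nlinarith [m.cast_nonneg (α := ℝ)])

end QuadraticRecurrence

/-- If `(x_m)` is a sequence of nonnegative reals satisfying, for all `m ≥ 8`,
`x_m = 960 x_{m−1} + 896 x_{m−2} + 32 ∑_{j=1}^{m−1} x_{m−j−1} x_{j−1}`, then there exist
positive constants `K₁, K₂` with `x_m ≤ K₁ K₂^m` for all `m ≥ 0`. -/
theorem majorant_geometric_growth (x : ℕ → ℝ) (hpos : ∀ m, 0 ≤ x m)
    (hrec : ∀ m, 8 ≤ m →
      x m = 960 * x (m - 1) + 896 * x (m - 2) +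
        32 * ∑ j ∈ Finset.Icc 1 (m - 1), x (m - j - 1) * x (j - 1)) :
    ∃ K₁ K₂ : ℝ, 0 < K₁ ∧ 0 < K₂ ∧ ∀ m : ℕ, x m ≤ K₁ * K₂ ^ m := by
  refine exists_geometric_bound_of_quadratic_recurrence (a := 960) (b := 896) (c := 32) (N := 6)
    hpos (by norm_num) (by norm_num) (by norm_num) fun n hn ↦ (hrec (n + 2) (by omega)).le.trans_eq ?_
  rw [← sum_Icc_eq_sum_antidiagonal (fun i j ↦ x i * x j)]
  refine congrArg₂ _ rfl (congrArg _ (sum_congr rfl fun j _ ↦ ?_))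
  congr 2; omega
end
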